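/- arXiv:1002.4280 — 4 statements merged into one kernel-verified Lean document; each statement's English description precedes it below -/
import Mathlib

section
/- For any finite-dimensional Lie algebra L over a field, L is capable (i.e., there exists a Lie algebra H with L ≅ H/Z(H)) if and only if the epicenter Z*(L) is trivial, where Z*(L) is the intersection of φ(Z(E)) over all central extensions φ: E → L. -/
open Module Function

universe u v

/-! ### Product of Lie algebras -/

section ProdLie

variable (k : Type) [Field k]
variable (L₁ : Type*) (L₂ : Type*) [LieRing L₁] [LieRing L₂]

instance Prod.instLieRing : LieRing (L₁ × L₂) where
  bracket x y := (⁅x.1, y.1⁆, ⁅x.2, y.2⁆)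
  add_lie x y z := by ext <;> exact add_lie _ _ _
  lie_add x y z := by ext <;> exact lie_add _ _ _
  lie_self x := by ext <;> exact lie_self _
  leibniz_lie x y z := by ext <;> exact leibniz_lie _ _ _

instance Prod.instLieAlgebra [LieAlgebra k L₁] [LieAlgebra k L₂] :
    LieAlgebra k (L₁ × L₂) where
  lie_smul c x y := by ext <;> exact lie_smul _ _ _

end ProdLie

section Defs

variable (k : Type) [Field k]
variable (L : Type u) [LieRing L] [LieAlgebra k L]

/-- The derived subalgebra `L² = ⁅L, L⁆` as a Lie ideal. -/
def derived : LieIdeal k L := ⁅(⊤ : LieIdeal k L), (⊤ : LieIdeal k L)⁆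

/-- A Lie algebra is capable if it is isomorphic to `H / Z(H)` for some Lie algebra `H`. -/
def IsCapable : Prop :=
  ∃ (H : Type u) (_ : LieRing H) (_ : LieAlgebra k H),
    Nonempty (L ≃ₗ⁅k⁆ H ⧸ LieAlgebra.center k H)

/-- A surjective Lie algebra morphism with central kernel. -/
def IsCentralExtension {E : Type u} [LieRing E] [LieAlgebra k E] (φ : E →ₗ⁅k⁆ L) : Prop :=
  Function.Surjective φ ∧ φ.ker ≤ LieAlgebra.center k E

/-- The epicenter `Z^*(L)`: the intersection of the images `φ(Z(E))` over all central
extensions `φ : E → L`. -/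
def epicenter : LieIdeal k L :=
  sInf {I : LieIdeal k L |
    ∃ (E : Type u) (_ : LieRing E) (_ : LieAlgebra k E) (φ : E →ₗ⁅k⁆ L),
      IsCentralExtension k L φ ∧ (I : Set L) = φ '' (LieAlgebra.center k E)}

/-! ### The nonabelian exterior square -/

/-- The defining relations of the nonabelian exterior square of a Lie algebra. -/
def exteriorRels : Set (FreeLieAlgebra k (L × L)) :=
  {a | (∃ (x x' y : L), a = FreeLieAlgebra.of k (x + x', y) - FreeLieAlgebra.of k (x, y)
          - FreeLieAlgebra.of k (x', y)) ∨
       (∃ (x y y' : L), a = FreeLieAlgebra.of k (x, y + y') - FreeLieAlgebra.of k (x, y)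
          - FreeLieAlgebra.of k (x, y')) ∨
       (∃ (c : k) (x y : L), a = FreeLieAlgebra.of k (c • x, y) - c • FreeLieAlgebra.of k (x, y)) ∨
       (∃ (c : k) (x y : L), a = FreeLieAlgebra.of k (x, c • y) - c • FreeLieAlgebra.of k (x, y)) ∨
       (∃ (x x' y : L), a = FreeLieAlgebra.of k (⁅x, x'⁆, y) - FreeLieAlgebra.of k (x, ⁅x', y⁆)
          + FreeLieAlgebra.of k (x', ⁅x, y⁆)) ∨
       (∃ (x y y' : L), a = FreeLieAlgebra.of k (x, ⁅y, y'⁆) - FreeLieAlgebra.of k (⁅y', x⁆, y)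
          + FreeLieAlgebra.of k (⁅y, x⁆, y')) ∨
       (∃ (x y x' y' : L), a = ⁅FreeLieAlgebra.of k (x, y), FreeLieAlgebra.of k (x', y')⁆
          + FreeLieAlgebra.of k (⁅y, x⁆, ⁅x', y'⁆)) ∨
       (∃ (x : L), a = FreeLieAlgebra.of k (x, x))}

/-- The ideal of relations of the nonabelian exterior square. -/
noncomputable def exteriorIdeal : LieIdeal k (FreeLieAlgebra k (L × L)) :=
  LieSubmodule.lieSpan k _ (exteriorRels k L)

/-- The nonabelian exterior square `L ∧ L`. -/
abbrev ExteriorSquare := FreeLieAlgebra k (L × L) ⧸ exteriorIdeal k L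

variable {L} in
/-- The element `x ∧ y` of the nonabelian exterior square. -/
noncomputable def wedge (x y : L) : ExteriorSquare k L :=
  LieSubmodule.Quotient.mk' (exteriorIdeal k L) (FreeLieAlgebra.of k (x, y))

/-- The exterior center `Z^∧(L) = {x | x ∧ y = 0 for all y}`. -/
def exteriorCenter : Set L := {x | ∀ y : L, wedge k x y = 0}

end Defs

section Defs2

variable (k : Type) [Field k]
variable (L : Type u) [LieRing L] [LieAlgebra k L]

/-- The canonical free presentation `F(L) → L`. -/
noncomputable def pres : FreeLieAlgebra k L →ₗ⁅k⁆ L := FreeLieAlgebra.lift k id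

/-- The Schur multiplier computed from a presentation `ρ : F(L) → L'`,
namely `(ker ρ ∩ F²) / ⁅ker ρ, F⁆`. -/
abbrev multOf {L' : Type v} [LieRing L'] [LieAlgebra k L']
    (ρ : FreeLieAlgebra k L →ₗ⁅k⁆ L') : Type _ :=
  (ρ.ker ⊓ derived k (FreeLieAlgebra k L)).toSubmodule ⧸
    ((⁅ρ.ker, (⊤ : LieIdeal k (FreeLieAlgebra k L))⁆ :
        LieIdeal k (FreeLieAlgebra k L)).toSubmodule.comap
      (ρ.ker ⊓ derived k (FreeLieAlgebra k L)).toSubmodule.subtype)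

/-- The Schur multiplier `M(L) = (R ∩ F²)/⁅R, F⁆` for the canonical free
presentation `0 → R → F(L) → L → 0`. -/
noncomputable abbrev SchurMultiplier : Type _ := multOf k L (pres k L)

/-- The quotient map `L → L ⧸ N` as a morphism of Lie algebras. -/
def lieQuotMk (N : LieIdeal k L) : L →ₗ⁅k⁆ L ⧸ N :=
  { toLinearMap := (N : Submodule k L).mkQ
    map_lie' := rfl }

/-- The canonical presentation `F(L) → L ⧸ N` of a quotient of `L`. -/
noncomputable def presQ (N : LieIdeal k L) : FreeLieAlgebra k L →ₗ⁅k⁆ L ⧸ N :=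
  (lieQuotMk k L N).comp (pres k L)

end Defs2

section maps

variable (k : Type) [Field k]
variable (L : Type u) [LieRing L] [LieAlgebra k L]

lemma ker_le_kerQ (N : LieIdeal k L) : (pres k L).ker ≤ (presQ k L N).ker := by
  intro x hx
  rw [LieHom.mem_ker] at hx ⊢
  simp [presQ, LieHom.comp_apply, hx, lieQuotMk]

/-- The natural map `M(L) → M(L/N)` on Schur multipliers induced by a
(central) ideal `N` of `L`. -/
noncomputable def multMap (N : LieIdeal k L) :
    SchurMultiplier k L →ₗ[k] multOf k L (presQ k L N) :=
  Submodule.mapQ _ _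
    (Submodule.inclusion (by
      exact_mod_cast inf_le_inf_right (derived k (FreeLieAlgebra k L)) (ker_le_kerQ k L N)))
    (by
      intro x hx
      simp only [Submodule.mem_comap] at hx ⊢
      have hmono : (⁅(pres k L).ker, (⊤ : LieIdeal k (FreeLieAlgebra k L))⁆ :
          LieIdeal k (FreeLieAlgebra k L)) ≤
          ⁅(presQ k L N).ker, (⊤ : LieIdeal k (FreeLieAlgebra k L))⁆ :=
        LieSubmodule.mono_lie_left _ (ker_le_kerQ k L N)
      exact hmono hx)

end maps

section lift

variable {k : Type} [Field k]
variable {L : Type u} [LieRing L] [LieAlgebra k L]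
variable {L' : Type v} [LieRing L'] [LieAlgebra k L']

/-- Universal property of quotients of Lie algebras. -/
def lieQuotLift (I : LieIdeal k L) (f : L →ₗ⁅k⁆ L') (h : I ≤ f.ker) : (L ⧸ I) →ₗ⁅k⁆ L' :=
  { toLinearMap := (I : Submodule k L).liftQ f.toLinearMap (fun x hx => by
      have := h hx; rwa [LieHom.mem_ker] at this)
    map_lie' := by
      rintro ⟨x⟩ ⟨y⟩
      exact f.map_lie x y }

@[simp] lemma lieQuotLift_mk (I : LieIdeal k L) (f : L →ₗ⁅k⁆ L') (h : I ≤ f.ker) (x : L) :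
    lieQuotLift I f h (lieQuotMk k L I x) = f x := rfl

end lift

section extmaps

variable (k : Type) [Field k]
variable (L : Type u) [LieRing L] [LieAlgebra k L]

/-- `x ∧ y` rewritten via the quotient morphism. -/
lemma wedge_def (x y : L) :
    wedge k x y = lieQuotMk k _ (exteriorIdeal k L) (FreeLieAlgebra.of k (x, y)) := rfl

/-- The lift to the free Lie algebra of the map `(x, y) ↦ x ∧ y` valued in the
exterior square of a quotient of `L`. -/
noncomputable def extAux (N : LieIdeal k L) :
    FreeLieAlgebra k (L × L) →ₗ⁅k⁆ ExteriorSquare k (L ⧸ N) :=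
  FreeLieAlgebra.lift k fun p => wedge k (lieQuotMk k L N p.1) (lieQuotMk k L N p.2)

lemma wedge_mem_rel_zero {M : Type v} [LieRing M] [LieAlgebra k M]
    {a : FreeLieAlgebra k (M × M)} (ha : a ∈ exteriorRels k M) :
    lieQuotMk k _ (exteriorIdeal k M) a = 0 := by
  have h : a ∈ exteriorIdeal k M := LieSubmodule.subset_lieSpan ha
  show (exteriorIdeal k M : Submodule k (FreeLieAlgebra k (M × M))).mkQ a = 0
  rw [Submodule.mkQ_apply, Submodule.Quotient.mk_eq_zero]
  exact h

lemma extAux_rels (N : LieIdeal k L) : exteriorIdeal k L ≤ (extAux k L N).ker := by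
  rw [exteriorIdeal, LieSubmodule.lieSpan_le]
  intro a ha
  rw [SetLike.mem_coe, LieHom.mem_ker]
  set q := lieQuotMk k L N with hq
  have key : ∀ x y : L, extAux k L N (FreeLieAlgebra.of k (x, y)) =
      lieQuotMk k _ (exteriorIdeal k (L ⧸ N)) (FreeLieAlgebra.of k (q x, q y)) := by
    intro x y; rw [extAux, FreeLieAlgebra.lift_of_apply]; rfl
  obtain h|h|h|h|h|h|h|h := ha
  · obtain ⟨x, x', y, rfl⟩ := h
    simp only [map_sub, key]
    rw [← map_sub, ← map_sub]
    apply wedge_mem_rel_zero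
    exact Or.inl ⟨q x, q x', q y, by rw [map_add]⟩
  · obtain ⟨x, y, y', rfl⟩ := h
    simp only [map_sub, key]
    rw [← map_sub, ← map_sub]
    apply wedge_mem_rel_zero
    exact Or.inr (Or.inl ⟨q x, q y, q y', by rw [map_add]⟩)
  · obtain ⟨c, x, y, rfl⟩ := h
    simp only [map_sub, map_smul, key]
    rw [← map_smul (lieQuotMk k _ (exteriorIdeal k (L ⧸ N))) c
      (FreeLieAlgebra.of k (q x, q y)), ← map_sub]
    apply wedge_mem_rel_zero
    exact Or.inr (Or.inr (Or.inl ⟨c, q x, q y, rfl⟩))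
  · obtain ⟨c, x, y, rfl⟩ := h
    simp only [map_sub, map_smul, key]
    rw [← map_smul (lieQuotMk k _ (exteriorIdeal k (L ⧸ N))) c
      (FreeLieAlgebra.of k (q x, q y)), ← map_sub]
    apply wedge_mem_rel_zero
    exact Or.inr (Or.inr (Or.inr (Or.inl ⟨c, q x, q y, rfl⟩)))
  · obtain ⟨x, x', y, rfl⟩ := h
    simp only [map_sub, map_add, key]
    rw [← map_sub, ← map_add]
    apply wedge_mem_rel_zero
    refine Or.inr (Or.inr (Or.inr (Or.inr (Or.inl ⟨q x, q x', q y, ?_⟩))))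
    simp [LieHom.map_lie]
  · obtain ⟨x, y, y', rfl⟩ := h
    simp only [map_sub, map_add, key]
    rw [← map_sub, ← map_add]
    apply wedge_mem_rel_zero
    refine Or.inr (Or.inr (Or.inr (Or.inr (Or.inr (Or.inl ⟨q x, q y, q y', ?_⟩)))))
    simp [LieHom.map_lie]
  · obtain ⟨x, y, x', y', rfl⟩ := h
    simp only [map_add, LieHom.map_lie, key]
    rw [← LieHom.map_lie, ← map_add]
    apply wedge_mem_rel_zero
    refine Or.inr (Or.inr (Or.inr (Or.inr (Or.inr (Or.inr (Or.inl
      ⟨q x, q y, q x', q y', ?_⟩))))))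
    simp [LieHom.map_lie]
  · obtain ⟨x, rfl⟩ := h
    rw [key]
    apply wedge_mem_rel_zero
    exact Or.inr (Or.inr (Or.inr (Or.inr (Or.inr (Or.inr (Or.inr ⟨q x, rfl⟩))))))

/-- The natural morphism `L ∧ L → (L/N) ∧ (L/N)` of exterior squares. -/
noncomputable def extSqMap (N : LieIdeal k L) :
    ExteriorSquare k L →ₗ⁅k⁆ ExteriorSquare k (L ⧸ N) :=
  lieQuotLift (exteriorIdeal k L) (extAux k L N) (extAux_rels k L N)

/-- The commutator morphism `L ∧ L → L`, `x ∧ y ↦ ⁅x, y⁆`. -/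
noncomputable def commutatorMap : ExteriorSquare k L →ₗ⁅k⁆ L :=
  lieQuotLift (exteriorIdeal k L) (FreeLieAlgebra.lift k fun p : L × L => ⁅p.1, p.2⁆)
    (by
      rw [exteriorIdeal, LieSubmodule.lieSpan_le]
      intro a ha
      rw [SetLike.mem_coe, LieHom.mem_ker]
      obtain h|h|h|h|h|h|h|h := ha
      · obtain ⟨x, x', y, rfl⟩ := h
        simp [FreeLieAlgebra.lift_of_apply, add_lie]
      · obtain ⟨x, y, y', rfl⟩ := h
        simp [FreeLieAlgebra.lift_of_apply, lie_add]
      · obtain ⟨c, x, y, rfl⟩ := h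
        simp [FreeLieAlgebra.lift_of_apply, smul_lie]
      · obtain ⟨c, x, y, rfl⟩ := h
        simp [FreeLieAlgebra.lift_of_apply, lie_smul]
      · obtain ⟨x, x', y, rfl⟩ := h
        simp only [map_sub, map_add, FreeLieAlgebra.lift_of_apply, lie_lie]
        abel
      · obtain ⟨x, y, y', rfl⟩ := h
        simp only [map_sub, map_add, FreeLieAlgebra.lift_of_apply, lie_lie]
        rw [leibniz_lie x y' y, ← lie_skew y ⁅x, y'⁆]
        abel
      · obtain ⟨x, y, x', y', rfl⟩ := h
        simp only [map_add, LieHom.map_lie, FreeLieAlgebra.lift_of_apply]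
        rw [← lie_skew y x]
        simp
      · obtain ⟨x, rfl⟩ := h
        simp [FreeLieAlgebra.lift_of_apply])

end extmaps

section more

variable (k : Type) [Field k]
variable (L : Type u) [LieRing L] [LieAlgebra k L]

/-- A Lie algebra is a Heisenberg algebra `H(m)` (of dimension `2m + 1`) iff its derived
subalgebra coincides with its centre and is one-dimensional, and it has dimension `2m + 1`. -/
def IsHeisenberg (m : ℕ) : Prop :=
  derived k L = LieAlgebra.center k L ∧ Module.finrank k L = 2 * m + 1 ∧
    Module.finrank k (derived k L) = 1

/-- A vector space regarded as an abelian Lie algebra. -/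
def AbelianLieOf (V : Type v) : Type v := V

instance (V : Type v) [AddCommGroup V] : AddCommGroup (AbelianLieOf V) :=
  inferInstanceAs (AddCommGroup V)

instance (V : Type v) [AddCommGroup V] [Module k V] : Module k (AbelianLieOf V) :=
  inferInstanceAs (Module k V)

instance (V : Type v) [AddCommGroup V] : LieRing (AbelianLieOf V) where
  bracket _ _ := 0
  add_lie _ _ _ := by simp
  lie_add _ _ _ := by simp
  lie_self _ := rfl
  leibniz_lie _ _ _ := by simp

instance (V : Type v) [AddCommGroup V] [Module k V] : LieAlgebra k (AbelianLieOf V) where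
  lie_smul _ _ _ := by
    show (0 : AbelianLieOf V) = _ • (0 : AbelianLieOf V)
    simp

/-- A decomposition of `L` as the direct sum of a Heisenberg algebra `H(m)` and an
abelian Lie algebra of dimension `j`. -/
structure HeisenbergAbelianDecomp (m j : ℕ) where
  H : Type u
  A : Type u
  [instHL : LieRing H]
  [instHA : LieAlgebra k H]
  [instAL : LieRing A]
  [instAA : LieAlgebra k A]
  heis : IsHeisenberg k H m
  abel : IsLieAbelian A
  dimA : Module.finrank k A = j
  equiv : Nonempty (L ≃ₗ⁅k⁆ H × A)

/-- The projection `H × A → H` as a Lie algebra morphism. -/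
def lieFst (H A : Type u) [LieRing H] [LieAlgebra k H] [LieRing A] [LieAlgebra k A] :
    H × A →ₗ⁅k⁆ H :=
  { toLinearMap := LinearMap.fst k H A
    map_lie' := rfl }

end more

/-!
The free central extension `F/⁅R, F⁆ → L` of a free presentation `R ↪ F ↠ L` maps over `L`
into every central extension `ψ : M → L`, and any such map sends centre into centre. Hence the
image of the centre of `F/⁅R, F⁆` is the smallest of all the images `ψ(Z(M))`, i.e. it is the
epicenter. If the epicenter vanishes, the centre of `F/⁅R, F⁆` is exactly the kernel, so
`L ≅ (F/⁅R, F⁆)/Z`. Conversely, if `L ≅ H/Z(H)` then `H → L` is a central extension whose centre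
maps to `0`.
-/

section LieQuotient

variable {k : Type} [Field k] {E M L : Type*} [LieRing E] [LieAlgebra k E] [LieRing M]
  [LieAlgebra k M] [LieRing L] [LieAlgebra k L]

lemma ker_lieQuotMk (N : LieIdeal k L) : (lieQuotMk k L N).ker = N := by
  refine LieSubmodule.ext _ _ fun x => ?_
  rw [LieHom.mem_ker]
  exact Submodule.Quotient.mk_eq_zero _

lemma lieQuotMk_surjective (N : LieIdeal k L) : Surjective (lieQuotMk k L N) :=
  Submodule.mkQ_surjective _

lemma lieQuotMk_mem_center_of_mem {I : LieIdeal k E} {x : E} (hx : x ∈ I) :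
    lieQuotMk k E ⁅I, ⊤⁆ x ∈ LieAlgebra.center k (E ⧸ ⁅I, (⊤ : LieIdeal k E)⁆) := by
  rw [LieModule.mem_maxTrivSubmodule]
  intro y
  obtain ⟨y, rfl⟩ := lieQuotMk_surjective _ y
  rw [← LieHom.map_lie, ← LieHom.mem_ker, ker_lieQuotMk, ← lie_skew]
  exact neg_mem (LieSubmodule.lie_mem_lie hx (LieSubmodule.mem_top y))

lemma lie_top_le_ker_of_forall_mem_center {f : E →ₗ⁅k⁆ M} {I : LieIdeal k E}
    (h : ∀ x ∈ I, f x ∈ LieAlgebra.center k M) : ⁅I, ⊤⁆ ≤ f.ker := by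
  rw [LieSubmodule.lie_le_iff]
  intro x hx y _
  have hfx := h x hx
  rw [LieModule.mem_maxTrivSubmodule] at hfx
  rw [LieHom.mem_ker, LieHom.map_lie, ← lie_skew, hfx, neg_zero]

/-- `M = f(E) + ker ψ` and `ker ψ` is central, so whatever commutes with `f(E)`
commutes with all of `M`. -/
lemma map_mem_center_of_surjective_comp {f : E →ₗ⁅k⁆ M} {ψ : M →ₗ⁅k⁆ L}
    (hker : ψ.ker ≤ LieAlgebra.center k M) (hsurj : Surjective (ψ.comp f))
    {z : E} (hz : z ∈ LieAlgebra.center k E) : f z ∈ LieAlgebra.center k M := by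
  rw [LieModule.mem_maxTrivSubmodule] at hz ⊢
  intro m
  obtain ⟨e, he⟩ := hsurj (ψ m)
  have hm : m - f e ∈ LieAlgebra.center k M := hker <| by
    rw [LieHom.mem_ker, map_sub, ← LieHom.comp_apply, he, sub_self]
  rw [LieModule.mem_maxTrivSubmodule] at hm
  calc ⁅m, f z⁆ = ⁅f e, f z⁆ + ⁅m - f e, f z⁆ := by rw [← add_lie, add_sub_cancel]
    _ = 0 := by rw [← LieHom.map_lie, hz, map_zero, zero_add, ← lie_skew, hm, neg_zero]

end LieQuotient

section CentralExtension

variable {k : Type} [Field k] {E L : Type u} [LieRing E] [LieAlgebra k E] [LieRing L]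
  [LieAlgebra k L]

lemma coe_map_center_of_surjective {φ : E →ₗ⁅k⁆ L} (hφ : Surjective φ) :
    ((LieAlgebra.center k E).map φ : Set L) = φ '' LieAlgebra.center k E := by
  rw [← LieSubmodule.coe_toSubmodule, LieIdeal.coe_map_of_surjective hφ, Submodule.map_coe]
  rfl

lemma epicenter_le_map_center {φ : E →ₗ⁅k⁆ L} (hφ : IsCentralExtension k L φ) :
    epicenter k L ≤ (LieAlgebra.center k E).map φ :=
  sInf_le ⟨E, _, _, φ, hφ, coe_map_center_of_surjective hφ.1⟩

lemma le_epicenter_of_forall_le_map_center {J : LieIdeal k L}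
    (hJ : ∀ (E : Type u) (_ : LieRing E) (_ : LieAlgebra k E) (φ : E →ₗ⁅k⁆ L),
      IsCentralExtension k L φ → J ≤ (LieAlgebra.center k E).map φ) :
    J ≤ epicenter k L := by
  refine le_sInf ?_
  rintro I ⟨E, _, _, φ, hφ, hI⟩
  rw [← SetLike.coe_subset_coe, hI, ← coe_map_center_of_surjective hφ.1, SetLike.coe_subset_coe]
  exact hJ E _ _ φ hφ

lemma isCapable_of_surjective_of_ker_eq_center {φ : E →ₗ⁅k⁆ L} (hφ : Surjective φ)
    (hker : φ.ker = LieAlgebra.center k E) : IsCapable k L := by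
  refine ⟨E, inferInstance, inferInstance, ⟨?_⟩⟩
  rw [← hker]
  exact ((φ.quotKerEquivRange.trans (LieEquiv.ofEq _ ⊤ (by simpa using hφ.range_eq))).trans
    LieSubalgebra.topEquiv).symm

lemma IsCapable.exists_surjective_ker_eq_center (hL : IsCapable k L) :
    ∃ (E : Type u) (_ : LieRing E) (_ : LieAlgebra k E) (φ : E →ₗ⁅k⁆ L),
      Surjective φ ∧ φ.ker = LieAlgebra.center k E := by
  obtain ⟨H, _, _, ⟨e⟩⟩ := hL
  refine ⟨H, _, _, e.symm.toLieHom.comp (lieQuotMk k H _),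
    e.symm.surjective.comp (lieQuotMk_surjective _), ?_⟩
  ext x
  rw [LieHom.mem_ker, LieHom.comp_apply, LieEquiv.coe_toLieHom, EmbeddingLike.map_eq_zero_iff,
    ← LieHom.mem_ker, ker_lieQuotMk]

end CentralExtension

section FreeCentralExtension

variable (k : Type) [Field k] (L : Type u) [LieRing L] [LieAlgebra k L]

/-- `F/⁅R, F⁆` for the free presentation `0 → R → F → L → 0`. -/
abbrev FreeCentralExtension : Type u :=
  FreeLieAlgebra k L ⧸ ⁅(pres k L).ker, (⊤ : LieIdeal k (FreeLieAlgebra k L))⁆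

lemma pres_surjective : Surjective (pres k L) := fun x =>
  ⟨FreeLieAlgebra.of k x, FreeLieAlgebra.lift_of_apply _ _⟩

noncomputable def FreeCentralExtension.proj : FreeCentralExtension k L →ₗ⁅k⁆ L :=
  lieQuotLift _ (pres k L) (LieSubmodule.lie_le_left _ _)

variable {k L}

lemma FreeCentralExtension.isCentralExtension_proj :
    IsCentralExtension k L (FreeCentralExtension.proj k L) := by
  refine ⟨Surjective.of_comp (g := lieQuotMk k _ _) (pres_surjective k L), fun e he => ?_⟩
  obtain ⟨x, rfl⟩ := lieQuotMk_surjective _ e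
  exact lieQuotMk_mem_center_of_mem he

lemma FreeCentralExtension.exists_comp_proj_eq {M : Type u} [LieRing M] [LieAlgebra k M]
    {ψ : M →ₗ⁅k⁆ L} (hψ : IsCentralExtension k L ψ) :
    ∃ θ : FreeCentralExtension k L →ₗ⁅k⁆ M, ψ.comp θ = FreeCentralExtension.proj k L := by
  choose s hs using hψ.1
  set θ := FreeLieAlgebra.lift k s
  have hψθ : ψ.comp θ = pres k L :=
    FreeLieAlgebra.hom_ext fun x => by simp [θ, pres, hs]
  have hθR : ∀ x ∈ (pres k L).ker, θ x ∈ LieAlgebra.center k M := fun x hx =>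
    hψ.2 <| by rwa [LieHom.mem_ker, ← LieHom.comp_apply, hψθ]
  refine ⟨lieQuotLift _ θ (lie_top_le_ker_of_forall_mem_center hθR), LieHom.ext fun e => ?_⟩
  obtain ⟨x, rfl⟩ := lieQuotMk_surjective _ e
  exact LieHom.congr_fun hψθ x

lemma FreeCentralExtension.map_center_le_map_center {M : Type u} [LieRing M] [LieAlgebra k M]
    {ψ : M →ₗ⁅k⁆ L} (hψ : IsCentralExtension k L ψ) :
    (LieAlgebra.center k (FreeCentralExtension k L)).map (FreeCentralExtension.proj k L) ≤
      (LieAlgebra.center k M).map ψ := by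
  obtain ⟨θ, hθ⟩ := exists_comp_proj_eq hψ
  have hsurj : Surjective (ψ.comp θ) := hθ ▸ isCentralExtension_proj.1
  rw [LieIdeal.map_le]
  rintro _ ⟨z, hz, rfl⟩
  rw [← hθ, LieHom.comp_apply]
  exact LieIdeal.mem_map (map_mem_center_of_surjective_comp hψ.2 hsurj hz)

lemma epicenter_eq_map_center_freeCentralExtension :
    epicenter k L =
      (LieAlgebra.center k (FreeCentralExtension k L)).map (FreeCentralExtension.proj k L) :=
  le_antisymm (epicenter_le_map_center FreeCentralExtension.isCentralExtension_proj)
    (le_epicenter_of_forall_le_map_center fun _ _ _ _ hψ =>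
      FreeCentralExtension.map_center_le_map_center hψ)

end FreeCentralExtension

theorem capable_iff_epicenter_eq_bot_general (k : Type) [Field k] (L : Type u) [LieRing L]
    [LieAlgebra k L] :
    IsCapable k L ↔ epicenter k L = ⊥ := by
  constructor
  · intro hL
    obtain ⟨E, _, _, φ, hφ, hker⟩ := hL.exists_surjective_ker_eq_center
    refine le_bot_iff.1 ((epicenter_le_map_center ⟨hφ, hker.le⟩).trans_eq ?_)
    rw [LieIdeal.map_eq_bot_iff, hker]
  · intro h
    have hproj := FreeCentralExtension.isCentralExtension_proj (k := k) (L := L)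
    refine isCapable_of_surjective_of_ker_eq_center hproj.1 (le_antisymm hproj.2 ?_)
    rw [← LieIdeal.map_eq_bot_iff, ← epicenter_eq_map_center_freeCentralExtension, h]

/-- A finite-dimensional Lie algebra over a field is capable if and only if
its epicenter is trivial. -/
theorem capable_iff_epicenter_eq_bot (k : Type) [Field k] (L : Type u) [LieRing L]
    [LieAlgebra k L] [Module.Finite k L] :
    IsCapable k L ↔ epicenter k L = ⊥ :=
  capable_iff_epicenter_eq_bot_general k L
end

section
/- Let L be a finite-dimensional Lie algebra and N a central ideal of L. Then a central ideal N is contained in the exterior center Z^∧(L) if and only if the natural map L ∧ L → (L/N) ∧ (L/N) is injective. -/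
/-!
If `N ⊆ Z^∧(L)`, then `(x, y) ↦ x ∧ y` is constant on cosets of `N` in each variable, so it
descends to a bilinear pairing on `L/N`. That pairing still satisfies the defining relations of the
exterior square (they can be checked on representatives), hence induces a Lie morphism
`(L/N) ∧ (L/N) → L ∧ L`, which is a left inverse of the natural map. Conversely, for `n ∈ N` the
natural map sends `n ∧ y` to `0 ∧ ȳ = 0`, so injectivity forces `n ∧ y = 0`.
-/

open Module Function

universe u v

section WedgeIdentities

variable (k : Type) [Field k] {M : Type v} [LieRing M] [LieAlgebra k M]

lemma wedge_add_left (x x' y : M) :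
    wedge k (x + x') y = wedge k x y + wedge k x' y := by
  have h := wedge_mem_rel_zero k (M := M)
    (a := FreeLieAlgebra.of k (x + x', y) - FreeLieAlgebra.of k (x, y)
      - FreeLieAlgebra.of k (x', y)) (Or.inl ⟨x, x', y, rfl⟩)
  simp only [map_sub, ← wedge_def] at h
  rwa [sub_sub, sub_eq_zero] at h

lemma wedge_add_right (x y y' : M) :
    wedge k x (y + y') = wedge k x y + wedge k x y' := by
  have h := wedge_mem_rel_zero k (M := M)
    (a := FreeLieAlgebra.of k (x, y + y') - FreeLieAlgebra.of k (x, y)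
      - FreeLieAlgebra.of k (x, y')) (Or.inr (Or.inl ⟨x, y, y', rfl⟩))
  simp only [map_sub, ← wedge_def] at h
  rwa [sub_sub, sub_eq_zero] at h

lemma wedge_smul_left (c : k) (x y : M) :
    wedge k (c • x) y = c • wedge k x y := by
  have h := wedge_mem_rel_zero k (M := M)
    (a := FreeLieAlgebra.of k (c • x, y) - c • FreeLieAlgebra.of k (x, y))
    (Or.inr (Or.inr (Or.inl ⟨c, x, y, rfl⟩)))
  simp only [map_sub, map_smul, ← wedge_def] at h
  rwa [sub_eq_zero] at h

lemma wedge_smul_right (c : k) (x y : M) :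
    wedge k x (c • y) = c • wedge k x y := by
  have h := wedge_mem_rel_zero k (M := M)
    (a := FreeLieAlgebra.of k (x, c • y) - c • FreeLieAlgebra.of k (x, y))
    (Or.inr (Or.inr (Or.inr (Or.inl ⟨c, x, y, rfl⟩))))
  simp only [map_sub, map_smul, ← wedge_def] at h
  rwa [sub_eq_zero] at h

lemma wedge_lie_left (x x' y : M) :
    wedge k ⁅x, x'⁆ y = wedge k x ⁅x', y⁆ - wedge k x' ⁅x, y⁆ := by
  have h := wedge_mem_rel_zero k (M := M)
    (a := FreeLieAlgebra.of k (⁅x, x'⁆, y) - FreeLieAlgebra.of k (x, ⁅x', y⁆)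
      + FreeLieAlgebra.of k (x', ⁅x, y⁆))
    (Or.inr (Or.inr (Or.inr (Or.inr (Or.inl ⟨x, x', y, rfl⟩)))))
  simp only [map_sub, map_add, ← wedge_def] at h
  linear_combination (norm := abel) h

lemma wedge_lie_right (x y y' : M) :
    wedge k x ⁅y, y'⁆ = wedge k ⁅y', x⁆ y - wedge k ⁅y, x⁆ y' := by
  have h := wedge_mem_rel_zero k (M := M)
    (a := FreeLieAlgebra.of k (x, ⁅y, y'⁆) - FreeLieAlgebra.of k (⁅y', x⁆, y)
      + FreeLieAlgebra.of k (⁅y, x⁆, y'))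
    (Or.inr (Or.inr (Or.inr (Or.inr (Or.inr (Or.inl ⟨x, y, y', rfl⟩))))))
  simp only [map_sub, map_add, ← wedge_def] at h
  linear_combination (norm := abel) h

lemma lie_wedge_wedge (x y x' y' : M) :
    ⁅wedge k x y, wedge k x' y'⁆ = -wedge k ⁅y, x⁆ ⁅x', y'⁆ := by
  have h := wedge_mem_rel_zero k (M := M)
    (a := ⁅FreeLieAlgebra.of k (x, y), FreeLieAlgebra.of k (x', y')⁆
      + FreeLieAlgebra.of k (⁅y, x⁆, ⁅x', y'⁆))
    (Or.inr (Or.inr (Or.inr (Or.inr (Or.inr (Or.inr (Or.inl ⟨x, y, x', y', rfl⟩)))))))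
  simp only [map_add, LieHom.map_lie, ← wedge_def] at h
  exact eq_neg_of_add_eq_zero_left h

lemma wedge_self (x : M) : wedge k x x = 0 :=
  wedge_mem_rel_zero k (Or.inr (Or.inr (Or.inr (Or.inr (Or.inr (Or.inr (Or.inr ⟨x, rfl⟩)))))))

noncomputable def wedgeBilin : M →ₗ[k] M →ₗ[k] ExteriorSquare k M :=
  LinearMap.mk₂ k (wedge k) (wedge_add_left k) (wedge_smul_left k) (wedge_add_right k)
    (wedge_smul_right k)

@[simp] lemma wedgeBilin_apply (x y : M) : wedgeBilin k x y = wedge k x y := rfl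

lemma wedge_zero_left (y : M) : wedge k 0 y = 0 :=
  (wedgeBilin k).map_zero₂ y

lemma wedge_swap (x y : M) : wedge k y x = -wedge k x y := by
  have h := wedge_self k (x + y)
  rw [wedge_add_left, wedge_add_right, wedge_add_right, wedge_self, wedge_self] at h
  linear_combination (norm := abel) h

end WedgeIdentities

section Lift

variable (k : Type) [Field k] {M : Type v} [LieRing M] [LieAlgebra k M]
variable {E : Type*} [LieRing E] [LieAlgebra k E]

structure IsExteriorPairing (f : M →ₗ[k] M →ₗ[k] E) : Prop where
  lie_left : ∀ x x' y : M, f ⁅x, x'⁆ y = f x ⁅x', y⁆ - f x' ⁅x, y⁆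
  lie_right : ∀ x y y' : M, f x ⁅y, y'⁆ = f ⁅y', x⁆ y - f ⁅y, x⁆ y'
  lie_apply_apply : ∀ x y x' y' : M, ⁅f x y, f x' y'⁆ = -f ⁅y, x⁆ ⁅x', y'⁆
  apply_self : ∀ x : M, f x x = 0

lemma isExteriorPairing_wedgeBilin : IsExteriorPairing k (wedgeBilin k (M := M)) where
  lie_left := wedge_lie_left k
  lie_right := wedge_lie_right k
  lie_apply_apply := lie_wedge_wedge k
  apply_self := wedge_self k

variable {k}

lemma IsExteriorPairing.of_compl₁₂_surjective {M' : Type*} [LieRing M'] [LieAlgebra k M']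
    {f : M' →ₗ[k] M' →ₗ[k] E} (q : M →ₗ⁅k⁆ M') (hq : Surjective q)
    (hf : IsExteriorPairing k (f.compl₁₂ (q : M →ₗ[k] M') (q : M →ₗ[k] M'))) :
    IsExteriorPairing k f := by
  have hf' (x y : M) : f (q x) (q y) = f.compl₁₂ (q : M →ₗ[k] M') (q : M →ₗ[k] M') x y := rfl
  refine ⟨hq.forall₃.2 fun x x' y => ?_, hq.forall₃.2 fun x y y' => ?_,
    hq.forall₂.2 fun x y => hq.forall₂.2 fun x' y' => ?_, hq.forall.2 fun x => hf.apply_self x⟩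
  · simpa only [← q.map_lie, hf'] using hf.lie_left x x' y
  · simpa only [← q.map_lie, hf'] using hf.lie_right x y y'
  · simpa only [← q.map_lie, hf'] using hf.lie_apply_apply x y x' y'

noncomputable def ExteriorSquare.lift {f : M →ₗ[k] M →ₗ[k] E} (hf : IsExteriorPairing k f) :
    ExteriorSquare k M →ₗ⁅k⁆ E :=
  lieQuotLift (exteriorIdeal k M) (FreeLieAlgebra.lift k fun p => f p.1 p.2) (by
    rw [exteriorIdeal, LieSubmodule.lieSpan_le]
    rintro a (⟨x, x', y, rfl⟩ | ⟨x, y, y', rfl⟩ | ⟨c, x, y, rfl⟩ | ⟨c, x, y, rfl⟩ |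
      ⟨x, x', y, rfl⟩ | ⟨x, y, y', rfl⟩ | ⟨x, y, x', y', rfl⟩ | ⟨x, rfl⟩) <;>
    simp only [SetLike.mem_coe, LieHom.mem_ker, map_add, map_sub, map_smul, LieHom.map_lie,
      FreeLieAlgebra.lift_of_apply]
    · simp
    · simp
    · simp
    · simp
    · rw [hf.lie_left]; abel
    · rw [hf.lie_right]; abel
    · rw [hf.lie_apply_apply, neg_add_cancel]
    · exact hf.apply_self x)

@[simp] lemma ExteriorSquare.lift_wedge {f : M →ₗ[k] M →ₗ[k] E} (hf : IsExteriorPairing k f)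
    (x y : M) : ExteriorSquare.lift hf (wedge k x y) = f x y := by
  rw [wedge_def, ExteriorSquare.lift, lieQuotLift_mk, FreeLieAlgebra.lift_of_apply]

lemma ExteriorSquare.hom_ext {g h : ExteriorSquare k M →ₗ⁅k⁆ E}
    (hgh : ∀ x y : M, g (wedge k x y) = h (wedge k x y)) : g = h := by
  have hfree : g.comp (lieQuotMk k _ (exteriorIdeal k M)) =
      h.comp (lieQuotMk k _ (exteriorIdeal k M)) :=
    FreeLieAlgebra.hom_ext fun p => hgh p.1 p.2
  ext z
  obtain ⟨a, rfl⟩ := Submodule.Quotient.mk_surjective _ z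
  exact LieHom.congr_fun hfree a

end Lift

section Retraction

variable {k : Type} [Field k] {L : Type u} [LieRing L] [LieAlgebra k L] {N : LieIdeal k L}

noncomputable def wedgeQuot (hN : (N : Set L) ⊆ exteriorCenter k L) :
    (L ⧸ N) →ₗ[k] (L ⧸ N) →ₗ[k] ExteriorSquare k L :=
  (wedgeBilin k).liftQ₂ (N : Submodule k L) (N : Submodule k L)
    (fun n hn => LinearMap.ext (hN hn))
    (fun n hn => LinearMap.ext fun x => by simp [wedge_swap k n x, hN hn x])

lemma wedgeQuot_mk (hN : (N : Set L) ⊆ exteriorCenter k L) (x y : L) :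
    wedgeQuot hN (lieQuotMk k L N x) (lieQuotMk k L N y) = wedge k x y := rfl

lemma isExteriorPairing_wedgeQuot (hN : (N : Set L) ⊆ exteriorCenter k L) :
    IsExteriorPairing k (wedgeQuot hN) :=
  .of_compl₁₂_surjective (lieQuotMk k L N) (Submodule.Quotient.mk_surjective _)
    (isExteriorPairing_wedgeBilin k)

noncomputable def extSqRetraction (hN : (N : Set L) ⊆ exteriorCenter k L) :
    ExteriorSquare k (L ⧸ N) →ₗ⁅k⁆ ExteriorSquare k L :=
  ExteriorSquare.lift (isExteriorPairing_wedgeQuot hN)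

variable (k N) in
@[simp] lemma extSqMap_wedge (x y : L) :
    extSqMap k L N (wedge k x y) = wedge k (lieQuotMk k L N x) (lieQuotMk k L N y) := by
  rw [wedge_def, extSqMap, lieQuotLift_mk, extAux, FreeLieAlgebra.lift_of_apply]

lemma leftInverse_extSqRetraction (hN : (N : Set L) ⊆ exteriorCenter k L) :
    LeftInverse (extSqRetraction hN) (extSqMap k L N) := by
  have hcomp : (extSqRetraction hN).comp (extSqMap k L N) = LieHom.id :=
    ExteriorSquare.hom_ext fun x y => by
      rw [LieHom.comp_apply, extSqMap_wedge, extSqRetraction, ExteriorSquare.lift_wedge,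
        wedgeQuot_mk, LieHom.id_apply]
  exact LieHom.congr_fun hcomp

lemma extSqMap_wedge_of_mem {n : L} (hn : n ∈ N) (y : L) : extSqMap k L N (wedge k n y) = 0 := by
  have hn0 : lieQuotMk k L N n = 0 := (Submodule.Quotient.mk_eq_zero _).mpr hn
  rw [extSqMap_wedge, hn0, wedge_zero_left]

end Retraction

theorem central_ideal_le_exteriorCenter_iff_general (k : Type) [Field k] (L : Type u) [LieRing L]
    [LieAlgebra k L] (N : LieIdeal k L) :
    (N : Set L) ⊆ exteriorCenter k L ↔ Function.Injective (extSqMap k L N) :=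
  ⟨fun hN => (leftInverse_extSqRetraction hN).injective,
    fun hinj _ hn y => hinj (by rw [extSqMap_wedge_of_mem hn, map_zero])⟩

/-- A central ideal `N` is contained in the exterior center `Z^∧(L)` iff the
natural map `L ∧ L → (L/N) ∧ (L/N)` is injective. -/
theorem central_ideal_le_exteriorCenter_iff (k : Type) [Field k] (L : Type u) [LieRing L]
    [LieAlgebra k L] [Module.Finite k L] (N : LieIdeal k L)
    (hN : N ≤ LieAlgebra.center k L) :
    (N : Set L) ⊆ exteriorCenter k L ↔ Function.Injective (extSqMap k L N) :=
  central_ideal_le_exteriorCenter_iff_general k L N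
end

section
/- For finite-dimensional Lie algebras L₁ and L₂, the exterior center satisfies Z^∧(L₁ ⊕ L₂) ⊆ Z^∧(L₁) ⊕ Z^∧(L₂). -/
open Module Function

universe u v

section ExteriorSquareMap

variable {k : Type} [Field k]
variable {L : Type u} [LieRing L] [LieAlgebra k L]
variable {M : Type v} [LieRing M] [LieAlgebra k M]

noncomputable def freeLiePairMap (f : L →ₗ⁅k⁆ M) :
    FreeLieAlgebra k (L × L) →ₗ⁅k⁆ FreeLieAlgebra k (M × M) :=
  FreeLieAlgebra.lift k fun p => FreeLieAlgebra.of k (f p.1, f p.2)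

@[simp] lemma freeLiePairMap_of (f : L →ₗ⁅k⁆ M) (p : L × L) :
    freeLiePairMap f (FreeLieAlgebra.of k p) = FreeLieAlgebra.of k (f p.1, f p.2) :=
  FreeLieAlgebra.lift_of_apply _ _

lemma freeLiePairMap_mem_exteriorRels (f : L →ₗ⁅k⁆ M) {a : FreeLieAlgebra k (L × L)}
    (ha : a ∈ exteriorRels k L) : freeLiePairMap f a ∈ exteriorRels k M := by
  rcases ha with ⟨x, x', y, rfl⟩ | ⟨x, y, y', rfl⟩ | ⟨c, x, y, rfl⟩ | ⟨c, x, y, rfl⟩ |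
    ⟨x, x', y, rfl⟩ | ⟨x, y, y', rfl⟩ | ⟨x, y, x', y', rfl⟩ | ⟨x, rfl⟩
  · exact Or.inl ⟨f x, f x', f y, by simp⟩
  · exact Or.inr <| Or.inl ⟨f x, f y, f y', by simp⟩
  · exact Or.inr <| Or.inr <| Or.inl ⟨c, f x, f y, by simp⟩
  · exact Or.inr <| Or.inr <| Or.inr <| Or.inl ⟨c, f x, f y, by simp⟩
  · exact Or.inr <| Or.inr <| Or.inr <| Or.inr <| Or.inl ⟨f x, f x', f y, by simp⟩
  · exact Or.inr <| Or.inr <| Or.inr <| Or.inr <| Or.inr <| Or.inl ⟨f x, f y, f y', by simp⟩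
  · exact Or.inr <| Or.inr <| Or.inr <| Or.inr <| Or.inr <| Or.inr <| Or.inl
      ⟨f x, f y, f x', f y', by simp⟩
  · exact Or.inr <| Or.inr <| Or.inr <| Or.inr <| Or.inr <| Or.inr <| Or.inr ⟨f x, by simp⟩

lemma exteriorIdeal_le_comap_freeLiePairMap (f : L →ₗ⁅k⁆ M) :
    exteriorIdeal k L ≤ (exteriorIdeal k M).comap (freeLiePairMap f) := by
  rw [exteriorIdeal, LieSubmodule.lieSpan_le]
  intro a ha
  exact LieIdeal.mem_comap.mpr
    (LieSubmodule.subset_lieSpan (freeLiePairMap_mem_exteriorRels f ha))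

lemma exteriorIdeal_le_ker (f : L →ₗ⁅k⁆ M) :
    exteriorIdeal k L ≤
      ((lieQuotMk k _ (exteriorIdeal k M)).comp (freeLiePairMap f)).ker := by
  intro a ha
  rw [LieHom.mem_ker, LieHom.comp_apply]
  exact (Submodule.Quotient.mk_eq_zero _).mpr (exteriorIdeal_le_comap_freeLiePairMap f ha)

variable (k) in
noncomputable def ExteriorSquare.map (f : L →ₗ⁅k⁆ M) :
    ExteriorSquare k L →ₗ⁅k⁆ ExteriorSquare k M :=
  lieQuotLift (exteriorIdeal k L) ((lieQuotMk k _ (exteriorIdeal k M)).comp (freeLiePairMap f))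
    (exteriorIdeal_le_ker f)

@[simp] lemma ExteriorSquare.map_wedge (f : L →ₗ⁅k⁆ M) (x y : L) :
    ExteriorSquare.map k f (wedge k x y) = wedge k (f x) (f y) := by
  rw [wedge_def, ExteriorSquare.map, lieQuotLift_mk, LieHom.comp_apply, freeLiePairMap_of]
  rfl

lemma map_mem_exteriorCenter_of_surjective {f : L →ₗ⁅k⁆ M} (hf : Surjective f) {x : L}
    (hx : x ∈ exteriorCenter k L) : f x ∈ exteriorCenter k M := by
  intro y
  obtain ⟨y, rfl⟩ := hf y
  rw [← ExteriorSquare.map_wedge, hx y, map_zero]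

end ExteriorSquareMap

theorem exteriorCenter_prod_le_general (k : Type) [Field k] (L₁ L₂ : Type u) [LieRing L₁]
    [LieAlgebra k L₁] [LieRing L₂] [LieAlgebra k L₂] :
    exteriorCenter k (L₁ × L₂) ⊆ (exteriorCenter k L₁) ×ˢ (exteriorCenter k L₂) :=
  fun _ hx =>
    ⟨map_mem_exteriorCenter_of_surjective (f := LieHom.fst k L₁ L₂) (fun y => ⟨(y, 0), rfl⟩) hx,
      map_mem_exteriorCenter_of_surjective (f := LieHom.snd k L₁ L₂) (fun y => ⟨(0, y), rfl⟩) hx⟩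

/-- `Z^∧(L₁ ⊕ L₂) ⊆ Z^∧(L₁) ⊕ Z^∧(L₂)`. -/
theorem exteriorCenter_prod_le (k : Type) [Field k] (L₁ L₂ : Type u) [LieRing L₁]
    [LieAlgebra k L₁] [LieRing L₂] [LieAlgebra k L₂] [Module.Finite k L₁]
    [Module.Finite k L₂] :
    exteriorCenter k (L₁ × L₂) ⊆ (exteriorCenter k L₁) ×ˢ (exteriorCenter k L₂) :=
  exteriorCenter_prod_le_general k L₁ L₂
end

section
/- The Heisenberg Lie algebra H(m) of dimension 2m+1 is capable if and only if m = 1. -/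
open Module Function

universe u v

/-!
Let `z` span `Z(L) = L²`. For `m ≥ 2`, `L` contains commuting pairs `x₁, y₁` and `x₂, y₂` with
`⁅x₁, y₁⁆ = ⁅x₂, y₂⁆ = z`. In a central extension `E → L` with lifts `Xᵢ, Yᵢ`, the lift
`C = ⁅X₂, Y₂⁆` of `z` commutes with `X₁` and `Y₁` by the Jacobi identity, and every bracket of `E`
is a multiple of `C` up to a central element; the Jacobi identity once more makes `⁅X₁, Y₁⁆`
central. Hence `z` lies in the epicentre `Z^*(L)`, which vanishes when `L` is capable.
For `m = 1`, `L` is the quotient of the free 3-step nilpotent Lie algebra on two generators by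
its centre.
-/

/-- The bracket of the free 3-step nilpotent Lie algebra on two generators `e₀, e₁`, in the
basis `e₀, e₁, e₂ = ⁅e₀, e₁⁆, e₃ = ⁅e₀, e₂⁆, e₄ = ⁅e₁, e₂⁆`. -/
def coverBracket (k : Type) [Field k] (a b : Fin 5 → k) : Fin 5 → k :=
  ![0, 0, a 0 * b 1 - a 1 * b 0, a 0 * b 2 - a 2 * b 0, a 1 * b 2 - a 2 * b 1]

/-- Its quotient by the centre `span {e₃, e₄}` is `H(1)`. -/
def HeisenbergCover (k : Type) [Field k] : Type u := ULift.{u} (Fin 5 → k)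

namespace HeisenbergCover

variable {k : Type} [Field k]

instance : AddCommGroup (HeisenbergCover.{u} k) :=
  inferInstanceAs (AddCommGroup (ULift (Fin 5 → k)))

instance : Module k (HeisenbergCover.{u} k) := inferInstanceAs (Module k (ULift (Fin 5 → k)))

def mk (a : Fin 5 → k) : HeisenbergCover.{u} k := ULift.up a

def coord (a : HeisenbergCover.{u} k) : Fin 5 → k := a.down

@[simp] lemma coord_mk (a : Fin 5 → k) : (mk.{u} a).coord = a := rfl
@[simp] lemma coord_add (a b : HeisenbergCover.{u} k) : (a + b).coord = a.coord + b.coord := rfl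
@[simp] lemma coord_smul (t : k) (a : HeisenbergCover.{u} k) : (t • a).coord = t • a.coord := rfl
@[simp] lemma coord_zero : (0 : HeisenbergCover.{u} k).coord = 0 := rfl

@[ext] lemma ext {a b : HeisenbergCover.{u} k} (h : ∀ i, a.coord i = b.coord i) : a = b :=
  ULift.ext a b (funext h)

instance : Bracket (HeisenbergCover.{u} k) (HeisenbergCover.{u} k) where
  bracket a b := mk (coverBracket k a.coord b.coord)

@[simp] lemma coord_lie (a b : HeisenbergCover.{u} k) :
    ⁅a, b⁆.coord = coverBracket k a.coord b.coord := rfl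

instance : LieRing (HeisenbergCover.{u} k) where
  add_lie a b c := by
    ext i; fin_cases i <;> simp [coverBracket] <;> ring
  lie_add a b c := by
    ext i; fin_cases i <;> simp [coverBracket] <;> ring
  lie_self a := by
    ext i; fin_cases i <;> simp [coverBracket] <;> ring
  leibniz_lie a b c := by
    ext i; fin_cases i <;> simp [coverBracket] <;> ring

instance : LieAlgebra k (HeisenbergCover.{u} k) where
  lie_smul t a b := by
    ext i; fin_cases i <;> simp [coverBracket] <;> ring

lemma mem_center_iff {a : HeisenbergCover.{u} k} :
    a ∈ LieAlgebra.center k (HeisenbergCover.{u} k) ↔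
      a.coord 0 = 0 ∧ a.coord 1 = 0 ∧ a.coord 2 = 0 := by
  rw [LieModule.mem_maxTrivSubmodule]
  constructor
  · intro h
    have h₀ := congrArg (coord · 2) (h (mk ![0, 1, 0, 0, 0]))
    have h₁ := congrArg (coord · 2) (h (mk ![1, 0, 0, 0, 0]))
    have h₂ := congrArg (coord · 3) (h (mk ![1, 0, 0, 0, 0]))
    simp [coverBracket] at h₀ h₁ h₂
    exact ⟨h₀, h₁, h₂⟩
  · rintro ⟨h₀, h₁, h₂⟩ b
    ext i; fin_cases i <;> simp [coverBracket, h₀, h₁, h₂]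

variable {L : Type v} [LieRing L] [LieAlgebra k L]

def lift (x y z : L) (hxy : ⁅x, y⁆ = z) (hz : ∀ w : L, ⁅w, z⁆ = 0) :
    HeisenbergCover.{u} k →ₗ⁅k⁆ L where
  toFun a := a.coord 0 • x + a.coord 1 • y + a.coord 2 • z
  map_add' a b := by simp only [coord_add, Pi.add_apply, add_smul]; abel
  map_smul' t a := by simp only [coord_smul, Pi.smul_apply, smul_eq_mul, mul_smul,
    RingHom.id_apply, smul_add]
  map_lie' {a b} := by
    have hyx : ⁅y, x⁆ = -z := by rw [← lie_skew, hxy]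
    have hz' : ∀ w : L, ⁅z, w⁆ = 0 := fun w => by rw [← lie_skew, hz, neg_zero]
    simp only [coord_lie, coverBracket, Matrix.cons_val_zero, Matrix.cons_val_one,
      Matrix.cons_val_two, Matrix.head_cons, Matrix.tail_cons, lie_add, add_lie, lie_smul,
      smul_lie, lie_self, hxy, hyx, hz, hz', smul_zero, add_zero, zero_add, zero_smul, smul_neg]
    module

variable {x y z : L} {hxy : ⁅x, y⁆ = z} {hz : ∀ w : L, ⁅w, z⁆ = 0}

lemma lift_apply (a : HeisenbergCover.{u} k) :
    lift x y z hxy hz a = a.coord 0 • x + a.coord 1 • y + a.coord 2 • z := rfl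

lemma lift_surjective (hspan : Submodule.span k (Set.range ![x, y, z]) = ⊤) :
    Surjective (lift.{u} (k := k) x y z hxy hz) := by
  intro v
  obtain ⟨c, rfl⟩ := (Submodule.mem_span_range_iff_exists_fun k).1
    (hspan ▸ Submodule.mem_top : v ∈ Submodule.span k (Set.range ![x, y, z]))
  exact ⟨mk ![c 0, c 1, c 2, 0, 0], by simp [lift_apply, Fin.sum_univ_three]⟩

lemma ker_lift (hli : LinearIndependent k ![x, y, z]) :
    (lift.{u} (k := k) x y z hxy hz).ker = LieAlgebra.center k (HeisenbergCover.{u} k) := by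
  ext a
  rw [LieHom.mem_ker, mem_center_iff, lift_apply]
  refine ⟨fun h => ?_, fun ⟨h₀, h₁, h₂⟩ => by simp [h₀, h₁, h₂]⟩
  have := Fintype.linearIndependent_iff.1 hli ![a.coord 0, a.coord 1, a.coord 2]
    (by simpa [Fin.sum_univ_three] using h)
  exact ⟨this 0, this 1, this 2⟩

end HeisenbergCover

section CentralExtension

variable {k : Type} [Field k] {L : Type u} [LieRing L] [LieAlgebra k L]

lemma isCapable_of_surjective {H : Type u} [LieRing H] [LieAlgebra k H] (ψ : H →ₗ⁅k⁆ L)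
    (hψ : Surjective ψ) (hker : ψ.ker = LieAlgebra.center k H) : IsCapable k L := by
  let χ := lieQuotLift (LieAlgebra.center k H) ψ hker.ge
  have hχ : Bijective χ := by
    refine ⟨(injective_iff_map_eq_zero χ).2 ?_, fun v => ?_⟩
    · rintro ⟨u⟩ hu
      exact (Submodule.Quotient.mk_eq_zero _).2 (hker ▸ LieHom.mem_ker.2 hu)
    · obtain ⟨u, rfl⟩ := hψ v
      exact ⟨lieQuotMk k H _ u, rfl⟩
  exact ⟨H, _, _, ⟨(LieEquiv.ofBijective χ hχ).symm⟩⟩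

lemma IsCapable.epicenter_eq_bot (h : IsCapable k L) : epicenter k L = ⊥ := by
  obtain ⟨H, _, _, ⟨e⟩⟩ := h
  let φ : H →ₗ⁅k⁆ L := e.symm.toLieHom.comp (lieQuotMk k H (LieAlgebra.center k H))
  have hφ : ∀ u, φ u = 0 ↔ u ∈ LieAlgebra.center k H := fun u =>
    (map_eq_zero_iff e.symm e.symm.injective).trans (Submodule.Quotient.mk_eq_zero _)
  refine eq_bot_iff.2 (sInf_le ⟨H, _, _, φ, ⟨?_, fun u hu => (hφ u).1 hu⟩, ?_⟩)
  · exact e.symm.surjective.comp (Submodule.mkQ_surjective _)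
  · ext v
    simp only [LieSubmodule.bot_coe, Set.mem_singleton_iff, Set.mem_image, SetLike.mem_coe]
    refine ⟨fun hv => ⟨0, zero_mem _, by rw [hv, map_zero]⟩, ?_⟩
    rintro ⟨u, hu, rfl⟩
    exact (hφ u).2 hu

variable {E : Type u} [LieRing E] [LieAlgebra k E] {φ : E →ₗ⁅k⁆ L}

lemma lie_eq_zero_of_map_eq_zero (hker : φ.ker ≤ LieAlgebra.center k E) {A : E} (hA : φ A = 0)
    (V : E) : ⁅V, A⁆ = 0 :=
  (LieModule.mem_maxTrivSubmodule k E E A).1 (hker hA) V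

lemma lie_lie_eq_zero_of_map (hker : φ.ker ≤ LieAlgebra.center k E) {A B B' : E}
    (hB : ⁅φ A, φ B⁆ = 0) (hB' : ⁅φ A, φ B'⁆ = 0) : ⁅A, ⁅B, B'⁆⁆ = 0 := by
  rw [leibniz_lie, ← lie_skew, lie_eq_zero_of_map_eq_zero hker (by rw [LieHom.map_lie, hB]),
    lie_eq_zero_of_map_eq_zero hker (by rw [LieHom.map_lie, hB']), neg_zero, add_zero]

/-- Modulo the central kernel, `⁅B, V⁆` is a multiple of `C`, which `A` centralizes. -/
lemma lie_lie_eq_zero_of_lie_eq_zero (hker : φ.ker ≤ LieAlgebra.center k E) {A C : E}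
    (hC : ∀ u v : L, ∃ c : k, ⁅u, v⁆ = c • φ C) (hAC : ⁅A, C⁆ = 0) (B V : E) :
    ⁅A, ⁅B, V⁆⁆ = 0 := by
  obtain ⟨c, hc⟩ := hC (φ B) (φ V)
  have h : φ (⁅B, V⁆ - c • C) = 0 := by rw [map_sub, map_smul, LieHom.map_lie, hc, sub_self]
  calc ⁅A, ⁅B, V⁆⁆ = ⁅A, ⁅B, V⁆ - c • C⁆ + c • ⁅A, C⁆ := by rw [lie_sub, lie_smul]; abel
    _ = 0 := by rw [lie_eq_zero_of_map_eq_zero hker h, hAC, smul_zero, add_zero]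

lemma lie_mem_center_of_lie_eq_zero (hker : φ.ker ≤ LieAlgebra.center k E) {X Y C : E}
    (hC : ∀ u v : L, ∃ c : k, ⁅u, v⁆ = c • φ C) (hXC : ⁅X, C⁆ = 0) (hYC : ⁅Y, C⁆ = 0) :
    ⁅X, Y⁆ ∈ LieAlgebra.center k E := by
  rw [LieModule.mem_maxTrivSubmodule]
  intro V
  rw [← lie_skew, lie_lie, lie_lie_eq_zero_of_lie_eq_zero hker hC hXC,
    lie_lie_eq_zero_of_lie_eq_zero hker hC hYC, sub_zero, neg_zero]

lemma IsCentralExtension.mem_image_center (hφ : IsCentralExtension k L φ) {z x₁ y₁ x₂ y₂ : L}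
    (hder : ∀ u v : L, ∃ c : k, ⁅u, v⁆ = c • z) (h₁ : ⁅x₁, y₁⁆ = z) (h₂ : ⁅x₂, y₂⁆ = z)
    (hx₁x₂ : ⁅x₁, x₂⁆ = 0) (hx₁y₂ : ⁅x₁, y₂⁆ = 0) (hy₁x₂ : ⁅y₁, x₂⁆ = 0)
    (hy₁y₂ : ⁅y₁, y₂⁆ = 0) :
    z ∈ φ '' LieAlgebra.center k E := by
  obtain ⟨X₁, rfl⟩ := hφ.1 x₁
  obtain ⟨Y₁, rfl⟩ := hφ.1 y₁
  obtain ⟨X₂, rfl⟩ := hφ.1 x₂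
  obtain ⟨Y₂, rfl⟩ := hφ.1 y₂
  have hC : φ ⁅X₂, Y₂⁆ = z := by rw [LieHom.map_lie, h₂]
  refine ⟨⁅X₁, Y₁⁆, lie_mem_center_of_lie_eq_zero hφ.2 (hC ▸ hder) ?_ ?_, by
    rw [LieHom.map_lie, h₁]⟩
  · exact lie_lie_eq_zero_of_map hφ.2 hx₁x₂ hx₁y₂
  · exact lie_lie_eq_zero_of_map hφ.2 hy₁x₂ hy₁y₂

end CentralExtension

section Heisenberg

variable {k : Type} [Field k] {L : Type u} [LieRing L] [LieAlgebra k L]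

lemma finrank_le_of_forall_mem_span {n : ℕ} (v : Fin n → L)
    (h : ∀ u : L, u ∈ Submodule.span k (Set.range v)) : finrank k L ≤ n := by
  rw [← finrank_top, ← Submodule.eq_top_iff'.2 h]
  simpa [Set.finrank] using finrank_range_le_card (R := k) v

lemma linearIndependent_of_lie_eq {x y z : L} (hxy : ⁅x, y⁆ = z) (hz : ∀ w : L, ⁅w, z⁆ = 0)
    (hz₀ : z ≠ 0) : LinearIndependent k ![x, y, z] := by
  rw [Fintype.linearIndependent_iff]
  intro c hc
  simp only [Fin.sum_univ_three, Matrix.cons_val_zero, Matrix.cons_val_one,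
    Matrix.cons_val_two, Matrix.head_cons, Matrix.tail_cons] at hc
  have hyx : ⁅y, x⁆ = -z := by rw [← lie_skew, hxy]
  have hz' : ∀ w : L, ⁅z, w⁆ = 0 := fun w => by rw [← lie_skew, hz, neg_zero]
  have h₀ : c 0 = 0 := by simpa [hxy, hz', hz₀] using congrArg (⁅·, y⁆) hc
  have h₁ : c 1 = 0 := by simpa [hyx, hz', hz₀] using congrArg (⁅·, x⁆) hc
  have h₂ : c 2 = 0 := by simpa [h₀, h₁, hz₀] using hc
  intro i
  fin_cases i <;> assumption

variable (k) in
structure SpansCenterAndDerived (z : L) : Prop where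
  ne_zero : z ≠ 0
  lie_eq_zero : ∀ w : L, ⁅w, z⁆ = 0
  exists_lie_eq_smul : ∀ u v : L, ∃ c : k, ⁅u, v⁆ = c • z
  exists_eq_smul_of_mem_center : ∀ u ∈ LieAlgebra.center k L, ∃ c : k, u = c • z

lemma IsHeisenberg.exists_spansCenterAndDerived {m : ℕ} (hL : IsHeisenberg k L m) :
    ∃ z : L, SpansCenterAndDerived k z := by
  obtain ⟨⟨z, hz⟩, hz₀, hspan⟩ := finrank_eq_one_iff'.1 hL.2.2
  have hmul : ∀ u ∈ derived k L, ∃ c : k, u = c • z := fun u hu => by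
    obtain ⟨c, hc⟩ := hspan ⟨u, hu⟩
    exact ⟨c, (congrArg Subtype.val hc).symm⟩
  refine ⟨z, ⟨fun h => hz₀ (Subtype.ext h), fun w => ?_, fun u v => hmul _ ?_,
    fun u hu => hmul u (hL.1 ▸ hu)⟩⟩
  · have hzc : z ∈ LieAlgebra.center k L := hL.1 ▸ hz
    exact (LieModule.mem_maxTrivSubmodule k L L z).1 hzc w
  · exact LieSubmodule.lie_mem_lie (LieSubmodule.mem_top u) (LieSubmodule.mem_top v)

namespace SpansCenterAndDerived

variable {z : L}

lemma exists_not_mem_center (hz : SpansCenterAndDerived k z) (h : 1 < finrank k L) :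
    ∃ x : L, x ∉ LieAlgebra.center k L := by
  by_contra! hcen
  refine (finrank_le_of_forall_mem_span ![z] fun u => ?_).not_gt h
  obtain ⟨c, rfl⟩ := hz.exists_eq_smul_of_mem_center u (hcen u)
  exact Submodule.smul_mem _ _ (Submodule.subset_span ⟨0, rfl⟩)

lemma exists_lie_smul_eq (hz : SpansCenterAndDerived k z) {u w : L} (h : ⁅u, w⁆ ≠ 0) :
    ∃ c : k, ⁅u, c • w⁆ = z := by
  obtain ⟨c, hc⟩ := hz.exists_lie_eq_smul u w
  have hc₀ : c ≠ 0 := by rintro rfl; exact h (hc.trans (zero_smul k z))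
  exact ⟨c⁻¹, by rw [lie_smul, hc, smul_smul, inv_mul_cancel₀ hc₀, one_smul]⟩

lemma exists_lie_eq (hz : SpansCenterAndDerived k z) {x : L}
    (hx : x ∉ LieAlgebra.center k L) : ∃ y : L, ⁅x, y⁆ = z := by
  obtain ⟨w, hw⟩ : ∃ w : L, ⁅x, w⁆ ≠ 0 := by
    by_contra! h
    refine hx ((LieModule.mem_maxTrivSubmodule k L L x).2 fun w => ?_)
    rw [← lie_skew, h, neg_zero]
  obtain ⟨c, hc⟩ := hz.exists_lie_smul_eq hw
  exact ⟨c • w, hc⟩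

lemma exists_eq_add_of_lie_eq (hz : SpansCenterAndDerived k z) {x y : L} (hxy : ⁅x, y⁆ = z)
    (v : L) : ∃ (a b : k) (w : L), ⁅x, w⁆ = 0 ∧ ⁅y, w⁆ = 0 ∧ v = a • x + b • y + w := by
  obtain ⟨c, hc⟩ := hz.exists_lie_eq_smul x v
  obtain ⟨d, hd⟩ := hz.exists_lie_eq_smul y v
  have hyx : ⁅y, x⁆ = -z := by rw [← lie_skew, hxy]
  refine ⟨-d, c, v + d • x - c • y, ?_, ?_, by module⟩
  · rw [lie_sub, lie_add, hc, lie_smul, lie_self, lie_smul, hxy, smul_zero, add_zero, sub_self]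
  · rw [lie_sub, lie_add, hd, lie_smul, hyx, lie_smul, lie_self, smul_zero, sub_zero,
      smul_neg, add_neg_cancel]

/-- If the centralizer of `x, y` were abelian it would be central, so `L = span {x, y, z}`. -/
lemma exists_commuting_lie_eq (hz : SpansCenterAndDerived k z) {x y : L} (hxy : ⁅x, y⁆ = z)
    (h : 3 < finrank k L) : ∃ x' y' : L, ⁅x, x'⁆ = 0 ∧ ⁅x, y'⁆ = 0 ∧ ⁅y, x'⁆ = 0 ∧
      ⁅y, y'⁆ = 0 ∧ ⁅x', y'⁆ = z := by
  obtain ⟨w, w', ⟨hxw, hyw⟩, ⟨hxw', hyw'⟩, hww'⟩ : ∃ w w' : L, (⁅x, w⁆ = 0 ∧ ⁅y, w⁆ = 0) ∧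
      (⁅x, w'⁆ = 0 ∧ ⁅y, w'⁆ = 0) ∧ ⁅w, w'⁆ ≠ 0 := by
    by_contra! hcomm
    refine (finrank_le_of_forall_mem_span ![x, y, z] fun v => ?_).not_gt h
    obtain ⟨a, b, w, hxw, hyw, rfl⟩ := hz.exists_eq_add_of_lie_eq hxy v
    have hw : w ∈ LieAlgebra.center k L := by
      refine (LieModule.mem_maxTrivSubmodule k L L w).2 fun u => ?_
      obtain ⟨a', b', w', hxw', hyw', rfl⟩ := hz.exists_eq_add_of_lie_eq hxy u
      rw [add_lie, add_lie, smul_lie, smul_lie, hxw, hyw, hcomm w' w ⟨hxw', hyw'⟩ ⟨hxw, hyw⟩,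
        smul_zero, smul_zero, add_zero, add_zero]
    obtain ⟨c, rfl⟩ := hz.exists_eq_smul_of_mem_center w hw
    refine add_mem (add_mem ?_ ?_) ?_ <;>
      exact Submodule.smul_mem _ _ (Submodule.subset_span (by simp))
  obtain ⟨c, hc⟩ := hz.exists_lie_smul_eq hww'
  exact ⟨w, c • w', hxw, by rw [lie_smul, hxw', smul_zero], hyw,
    by rw [lie_smul, hyw', smul_zero], hc⟩

lemma mem_epicenter (hz : SpansCenterAndDerived k z) (h : 3 < finrank k L) :
    z ∈ epicenter k L := by
  obtain ⟨x₁, hx₁⟩ := hz.exists_not_mem_center (by omega)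
  obtain ⟨y₁, h₁⟩ := hz.exists_lie_eq hx₁
  obtain ⟨x₂, y₂, hx₁x₂, hx₁y₂, hy₁x₂, hy₁y₂, h₂⟩ := hz.exists_commuting_lie_eq h₁ h
  rw [← SetLike.mem_coe, epicenter, LieSubmodule.coe_sInf, Set.mem_iInter₂]
  rintro I ⟨E, _, _, φ, hφ, hI⟩
  rw [hI]
  exact hφ.mem_image_center hz.exists_lie_eq_smul h₁ h₂ hx₁x₂ hx₁y₂ hy₁x₂ hy₁y₂

lemma isCapable (hz : SpansCenterAndDerived k z) (h : finrank k L = 3) : IsCapable k L := by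
  obtain ⟨x, hx⟩ := hz.exists_not_mem_center (by omega)
  obtain ⟨y, hxy⟩ := hz.exists_lie_eq hx
  have hli := linearIndependent_of_lie_eq (k := k) hxy hz.lie_eq_zero hz.ne_zero
  have hspan := hli.span_eq_top_of_card_eq_finrank (by simp [h])
  exact isCapable_of_surjective (HeisenbergCover.lift.{u} x y z hxy hz.lie_eq_zero)
    (HeisenbergCover.lift_surjective hspan) (HeisenbergCover.ker_lift hli)

end SpansCenterAndDerived

end Heisenberg

theorem heisenberg_capable_iff_general (k : Type) [Field k] (L : Type u) [LieRing L]
    [LieAlgebra k L] (m : ℕ) (hm : 1 ≤ m) (hL : IsHeisenberg k L m) :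
    IsCapable k L ↔ m = 1 := by
  obtain ⟨z, hz⟩ := hL.exists_spansCenterAndDerived
  refine ⟨fun hcap => ?_, fun hm₁ => hz.isCapable (by rw [hL.2.1, hm₁])⟩
  by_contra hm₁
  have h3 : 3 < finrank k L := by rw [hL.2.1]; omega
  have hz₀ : z ∈ epicenter k L := hz.mem_epicenter h3
  rw [hcap.epicenter_eq_bot, LieSubmodule.mem_bot] at hz₀
  exact hz.ne_zero hz₀

/-- the Heisenberg algebra `H(m)` is capable iff `m = 1`. -/
theorem heisenberg_capable_iff (k : Type) [Field k] (L : Type u) [LieRing L]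
    [LieAlgebra k L] [Module.Finite k L] (m : ℕ) (hm : 1 ≤ m) (hL : IsHeisenberg k L m) :
    IsCapable k L ↔ m = 1 :=
  heisenberg_capable_iff_general k L m hm hL
end
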